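/- arXiv:1206.6196 — 4 statements merged into one kernel-verified Lean document; each statement's English description precedes it below -/
import Mathlib

section
/- Suppose the elastic product ep with parameters α, β, ξ=0 and functions f, g (g strictly positive) is an inner product on (U*, ⊕, ⊗). Then f, extended by f(0_S,0_S)=0, is an inner product on S: it is symmetric, linear in each argument, and positive-definite. -/
noncomputable section

/-- A discrete time series is represented as a list of (timestamp, value) pairs,
stored in strictly *decreasing* timestamp order (head = last sample).
`IsTS` says timestamps strictly decrease along the list and no spatial value is zero,
i.e. the list represents an element of `U*` (the empty list being `Ω`). -/
def IsTS {S : Type*} [Zero S] (l : List (ℝ × S)) : Prop :=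
  l.Chain' (fun x y => y.1 < x.1) ∧ ∀ p ∈ l, p.2 ≠ (0 : S)

/-- The recursive elastic product with parameters `α β ξ` and functions `f`, `g`:
`ep(A₁ᵖ,B₁ᵠ) = α·ep(A₁ᵖ⁻¹,B₁ᵠ) + β·ep(A₁ᵖ⁻¹,B₁ᵠ⁻¹) + f(a(p),b(q))·g(t_{a(p)},t_{b(q)}) + α·ep(A₁ᵖ,B₁ᵠ⁻¹)`
with base case `ep(A,Ω) = ep(Ω,B) = ξ`. -/
def ep {S : Type*} (f : S → S → ℝ) (g : ℝ → ℝ → ℝ) (α β ξ : ℝ) :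
    List (ℝ × S) → List (ℝ × S) → ℝ
  | [], _ => ξ
  | _ :: _, [] => ξ
  | (t, a) :: A, (u, b) :: B =>
      α * ep f g α β ξ A ((u, b) :: B) + β * ep f g α β ξ A B
        + f a b * g t u + α * ep f g α β ξ ((t, a) :: A) B
  termination_by A B => A.length + B.length


open Classical in
/-- The timestamp-merging addition `⊕`: merge the two series by timestamps, adding the
spatial values at coinciding timestamps and deleting resulting zero values. -/
def tsAdd {S : Type*} [AddCommGroup S] :
    List (ℝ × S) → List (ℝ × S) → List (ℝ × S)
  | [], l => l
  | l, [] => l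
  | (t, a) :: A, (u, b) :: B =>
      if u < t then (t, a) :: tsAdd A ((u, b) :: B)
      else if t < u then (u, b) :: tsAdd ((t, a) :: A) B
      else if a + b = 0 then tsAdd A B
      else (t, a + b) :: tsAdd A B
  termination_by A B => A.length + B.length


open Classical in
/-- Scalar multiplication `⊗`: scale every spatial value, deleting everything if `λ = 0`. -/
def tsSmul {S : Type*} [AddCommGroup S] [Module ℝ S] (r : ℝ) (l : List (ℝ × S)) :
    List (ℝ × S) :=
  if r = 0 then [] else l.map fun p => (p.1, r • p.2)

/-- `ip` is an inner product on `(U*, ⊕, ⊗)`: symmetric, bilinear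
(linearity in the first argument together with symmetry), and positive definite. -/
structure IsInnerOnTS {S : Type*} [AddCommGroup S] [Module ℝ S]
    (ip : List (ℝ × S) → List (ℝ × S) → ℝ) : Prop where
  symm : ∀ A B, IsTS A → IsTS B → ip A B = ip B A
  add_left : ∀ A B C, IsTS A → IsTS B → IsTS C → ip (tsAdd A B) C = ip A C + ip B C
  smul_left : ∀ (r : ℝ) A B, IsTS A → IsTS B → ip (tsSmul r A) B = r * ip A B
  nonneg : ∀ A, IsTS A → 0 ≤ ip A A
  definite : ∀ A, IsTS A → (ip A A = 0 ↔ A = [])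

/-!
Embed `S` into `U*` by sending `a ≠ 0` to the one-point series `(0, a)` and `0` to `Ω`.
This embedding carries `+` and `•` to `⊕` and `⊗`, and on one-point series the elastic product
with `ξ = 0` is `f a b · g 0 0`. Hence `ep / g 0 0`, pulled back along the embedding, is an inner
product on `S` extending `f`; dividing by `g 0 0 > 0` preserves positivity.
-/

open Classical in
def tsSingle {S : Type*} [Zero S] (t : ℝ) (a : S) : List (ℝ × S) :=
  if a = 0 then [] else [(t, a)]

section tsSingle

variable {S : Type*} [AddCommGroup S]

theorem isTS_tsSingle (t : ℝ) (a : S) : IsTS (tsSingle t a) := by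
  unfold tsSingle
  split_ifs with h
  · exact ⟨.nil, by simp⟩
  · exact ⟨.singleton _, by simpa⟩

theorem tsSingle_eq_nil_iff {t : ℝ} {a : S} : tsSingle t a = [] ↔ a = 0 := by
  by_cases h : a = 0 <;> simp [tsSingle, h]

theorem tsAdd_tsSingle (t : ℝ) (a b : S) :
    tsAdd (tsSingle t a) (tsSingle t b) = tsSingle t (a + b) := by
  by_cases ha : a = 0
  · subst ha; by_cases hb : b = 0 <;> simp [tsSingle, hb, tsAdd]
  by_cases hb : b = 0
  · subst hb; simp [tsSingle, ha, tsAdd]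
  by_cases hab : a + b = 0 <;> simp [tsSingle, ha, hb, hab, tsAdd]

theorem tsSmul_tsSingle [Module ℝ S] (r t : ℝ) (a : S) :
    tsSmul r (tsSingle t a) = tsSingle t (r • a) := by
  by_cases hr : r = 0
  · simp [tsSingle, tsSmul, hr]
  by_cases ha : a = 0 <;> simp [tsSingle, tsSmul, hr, ha]

end tsSingle

theorem ep_tsSingle_tsSingle {S : Type*} [Zero S] (f : S → S → ℝ) (g : ℝ → ℝ → ℝ)
    (α β t u : ℝ) {a b : S} (ha : a ≠ 0) (hb : b ≠ 0) :
    ep f g α β 0 (tsSingle t a) (tsSingle u b) = f a b * g t u := by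
  simp [tsSingle, ha, hb, ep]

namespace IsInnerOnTS

variable {S : Type*} [AddCommGroup S] [Module ℝ S]
  {ip : List (ℝ × S) → List (ℝ × S) → ℝ} (hip : IsInnerOnTS ip) (t : ℝ)
include hip

theorem tsSingle_symm (a b : S) :
    ip (tsSingle t a) (tsSingle t b) = ip (tsSingle t b) (tsSingle t a) :=
  hip.symm _ _ (isTS_tsSingle t a) (isTS_tsSingle t b)

theorem tsSingle_add_left (a b c : S) :
    ip (tsSingle t (a + b)) (tsSingle t c) =
      ip (tsSingle t a) (tsSingle t c) + ip (tsSingle t b) (tsSingle t c) := by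
  rw [← tsAdd_tsSingle]
  exact hip.add_left _ _ _ (isTS_tsSingle t a) (isTS_tsSingle t b) (isTS_tsSingle t c)

theorem tsSingle_smul_left (r : ℝ) (a b : S) :
    ip (tsSingle t (r • a)) (tsSingle t b) = r * ip (tsSingle t a) (tsSingle t b) := by
  rw [← tsSmul_tsSingle]
  exact hip.smul_left _ _ _ (isTS_tsSingle t a) (isTS_tsSingle t b)

theorem tsSingle_self_nonneg (a : S) : 0 ≤ ip (tsSingle t a) (tsSingle t a) :=
  hip.nonneg _ (isTS_tsSingle t a)

theorem tsSingle_self_eq_zero_iff (a : S) : ip (tsSingle t a) (tsSingle t a) = 0 ↔ a = 0 := by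
  rw [hip.definite _ (isTS_tsSingle t a), tsSingle_eq_nil_iff]

end IsInnerOnTS

theorem ep_inner_implies_f_inner_general
    {S : Type*} [AddCommGroup S] [Module ℝ S]
    (f : S → S → ℝ) (g : ℝ → ℝ → ℝ) (hg : ∀ t u, 0 < g t u)
    (α β : ℝ)
    (hip : IsInnerOnTS (ep f g α β 0)) :
    ∃ F : S → S → ℝ,
      (∀ a b : S, a ≠ 0 → b ≠ 0 → F a b = f a b) ∧
      F 0 0 = 0 ∧
      (∀ a b, F a b = F b a) ∧
      (∀ a b c, F (a + b) c = F a c + F b c) ∧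
      (∀ (r : ℝ) (a b : S), F (r • a) b = r * F a b) ∧
      (∀ a, 0 ≤ F a a) ∧
      (∀ a, F a a = 0 ↔ a = 0) := by
  have hg₀ : 0 < g 0 0 := hg 0 0
  refine ⟨fun a b => ep f g α β 0 (tsSingle 0 a) (tsSingle 0 b) / g 0 0,
    fun a b ha hb => ?_, by simp [tsSingle, ep], fun a b => ?_, fun a b c => ?_,
    fun r a b => ?_, fun a => ?_, fun a => ?_⟩ <;> beta_reduce
  · rw [ep_tsSingle_tsSingle f g α β 0 0 ha hb, mul_div_cancel_right₀ _ hg₀.ne']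
  · rw [hip.tsSingle_symm]
  · rw [hip.tsSingle_add_left, add_div]
  · rw [hip.tsSingle_smul_left, mul_div_assoc]
  · exact div_nonneg (hip.tsSingle_self_nonneg 0 a) hg₀.le
  · rw [div_eq_zero_iff, hip.tsSingle_self_eq_zero_iff, or_iff_left hg₀.ne']

/-- if the elastic product with `ξ = 0` is an inner product on `(U*, ⊕, ⊗)`,
then `f`, extended by `f(0,0) = 0`, is an inner product on `S`: symmetric, linear in each
argument (by symmetry, linearity in the first suffices), and positive-definite. -/
theorem ep_inner_implies_f_inner
    {S : Type*} [AddCommGroup S] [Module ℝ S] (hS : ∃ s : S, s ≠ 0)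
    (f : S → S → ℝ) (g : ℝ → ℝ → ℝ) (hg : ∀ t u, 0 < g t u)
    (α β : ℝ)
    (hip : IsInnerOnTS (ep f g α β 0)) :
    ∃ F : S → S → ℝ,
      (∀ a b : S, a ≠ 0 → b ≠ 0 → F a b = f a b) ∧
      F 0 0 = 0 ∧
      (∀ a b, F a b = F b a) ∧
      (∀ a b c, F (a + b) c = F a c + F b c) ∧
      (∀ (r : ℝ) (a b : S), F (r • a) b = r * F a b) ∧
      (∀ a, 0 ≤ F a a) ∧
      (∀ a, F a a = 0 ↔ a = 0) :=
  ep_inner_implies_f_inner_general f g hg α β hip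

end
end

section
/- Suppose the elastic product ep with parameters α, β, ξ=0 is bilinear with respect to (⊕, ⊗) on U*. Then necessarily α = 1 and β = −1; i.e., (α,β)=(1,−1) is the unique pair of constants for which the recursive elastic product can be linear in its arguments. -/
noncomputable section

/-! Test additivity in the first argument on `[(1, s)] ⊕ [(0, s)] = [(1, s), (0, s)]` for some
`s ≠ 0`. Against `[(0, s)]` the additivity defect is `(α - 1) f(s, s) g(0, 0)`, forcing `α = 1`;
against `[(1, s), (0, s)]` it is `(2α² + β - α) f(s, s) g(0, 0)` plus a multiple of `α - 1`,
forcing `β = -1`. -/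

section TimeSeries

variable {S : Type*}

theorem isTS_singleton [Zero S] (t : ℝ) {a : S} (ha : a ≠ 0) : IsTS [(t, a)] :=
  ⟨List.isChain_singleton _, by simpa using ha⟩

theorem isTS_pair [Zero S] {t u : ℝ} (hut : u < t) {a b : S} (ha : a ≠ 0) (hb : b ≠ 0) :
    IsTS [(t, a), (u, b)] :=
  ⟨List.isChain_pair.mpr hut, by simp [ha, hb]⟩

theorem tsAdd_singleton_singleton_of_lt [AddCommGroup S] {t u : ℝ} (hut : u < t) (a b : S) :
    tsAdd [(t, a)] [(u, b)] = [(t, a), (u, b)] := by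
  simp [tsAdd, hut]

end TimeSeries

section ElasticProduct

variable {S : Type*} (f : S → S → ℝ) (g : ℝ → ℝ → ℝ) (α β : ℝ)

theorem ep_singleton_singleton (t u : ℝ) (a b : S) :
    ep f g α β 0 [(t, a)] [(u, b)] = f a b * g t u := by
  simp [ep]

theorem ep_pair_singleton (t u v : ℝ) (a b c : S) :
    ep f g α β 0 [(t, a), (u, b)] [(v, c)] = α * (f b c * g u v) + f a c * g t v := by
  simp [ep]

theorem ep_singleton_pair (t u v : ℝ) (a b c : S) :
    ep f g α β 0 [(t, a)] [(u, b), (v, c)] = f a b * g t u + α * (f a c * g t v) := by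
  simp [ep]

theorem ep_pair_pair (t u t' u' : ℝ) (a b c d : S) :
    ep f g α β 0 [(t, a), (u, b)] [(t', c), (u', d)] =
      α * (f b c * g u t' + α * (f b d * g u u')) + β * (f b d * g u u')
        + f a c * g t t' + α * (α * (f b d * g u u') + f a d * g t u') := by
  simp [ep]

variable [AddCommGroup S] {t u : ℝ}

theorem ep_tsAdd_sub_add_singleton (hut : u < t) (a b : S) (v : ℝ) (c : S) :
    ep f g α β 0 (tsAdd [(t, a)] [(u, b)]) [(v, c)]
        - (ep f g α β 0 [(t, a)] [(v, c)] + ep f g α β 0 [(u, b)] [(v, c)]) =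
      (α - 1) * (f b c * g u v) := by
  rw [tsAdd_singleton_singleton_of_lt hut, ep_pair_singleton, ep_singleton_singleton,
    ep_singleton_singleton]
  ring

theorem ep_tsAdd_sub_add_pair (hut : u < t) (a b c d : S) :
    ep f g α β 0 (tsAdd [(t, a)] [(u, b)]) [(t, c), (u, d)]
        - (ep f g α β 0 [(t, a)] [(t, c), (u, d)] + ep f g α β 0 [(u, b)] [(t, c), (u, d)]) =
      (α - 1) * (f b c * g u t) + (2 * α ^ 2 + β - α) * (f b d * g u u) := by
  rw [tsAdd_singleton_singleton_of_lt hut, ep_pair_pair, ep_singleton_pair, ep_singleton_pair]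
  ring

end ElasticProduct

theorem ep_bilinear_implies_alpha_one_beta_neg_one_general
    {S : Type*} [AddCommGroup S] (hS : ∃ s : S, s ≠ 0)
    (f : S → S → ℝ) (g : ℝ → ℝ → ℝ)
    (hg : ∀ t u, 0 < g t u)
    (hf_pos : ∀ a : S, a ≠ 0 → 0 < f a a)
    (α β : ℝ)
    (hadd_left : ∀ A B C, IsTS A → IsTS B → IsTS C →
      ep f g α β 0 (tsAdd A B) C = ep f g α β 0 A C + ep f g α β 0 B C) :
    α = 1 ∧ β = -1 := by
  obtain ⟨s, hs⟩ := hS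
  have hFG : f s s * g 0 0 ≠ 0 := (mul_pos (hf_pos s hs) (hg 0 0)).ne'
  have hP := isTS_singleton 1 hs
  have hQ := isTS_singleton 0 hs
  have hPQ := isTS_pair one_pos hs hs
  have hα : α = 1 := by
    have h := ep_tsAdd_sub_add_singleton f g α β one_pos s s 0 s
    rw [hadd_left _ _ _ hP hQ hQ, sub_self] at h
    exact sub_eq_zero.mp ((mul_eq_zero.mp h.symm).resolve_right hFG)
  subst hα
  have h := ep_tsAdd_sub_add_pair f g 1 β one_pos s s s s
  rw [hadd_left _ _ _ hP hQ hPQ, sub_self] at h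
  have hβ : (β + 1) * (f s s * g 0 0) = 0 := by linear_combination -h
  exact ⟨rfl, by linarith [(mul_eq_zero.mp hβ).resolve_right hFG]⟩

/-- if the elastic product with `ξ = 0` is bilinear with respect to `(⊕, ⊗)`
(`f` being an inner product on `S` and `g` strictly positive and symmetric), then
necessarily `α = 1` and `β = -1`. -/
theorem ep_bilinear_implies_alpha_one_beta_neg_one
    {S : Type*} [AddCommGroup S] [Module ℝ S] (hS : ∃ s : S, s ≠ 0)
    (f : S → S → ℝ) (g : ℝ → ℝ → ℝ)
    (hg : ∀ t u, 0 < g t u) (hg_symm : ∀ t u, g t u = g u t)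
    (hf_symm : ∀ a b, f a b = f b a)
    (hf_add : ∀ a b c, f (a + b) c = f a c + f b c)
    (hf_smul : ∀ (r : ℝ) (a b : S), f (r • a) b = r * f a b)
    (hf_pos : ∀ a : S, a ≠ 0 → 0 < f a a)
    (α β : ℝ)
    (hadd_left : ∀ A B C, IsTS A → IsTS B → IsTS C →
      ep f g α β 0 (tsAdd A B) C = ep f g α β 0 A C + ep f g α β 0 B C)
    (hsmul_left : ∀ (r : ℝ) A B, IsTS A → IsTS B →
      ep f g α β 0 (tsSmul r A) B = r * ep f g α β 0 A B)
    (hadd_right : ∀ A B C, IsTS A → IsTS B → IsTS C →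
      ep f g α β 0 A (tsAdd B C) = ep f g α β 0 A B + ep f g α β 0 A C)
    (hsmul_right : ∀ (r : ℝ) A B, IsTS A → IsTS B →
      ep f g α β 0 A (tsSmul r B) = r * ep f g α β 0 A B) :
    α = 1 ∧ β = -1 :=
  ep_bilinear_implies_alpha_one_beta_neg_one_general hS f g hg hf_pos α β hadd_left

end
end

section
/- Let eip be defined with α=1, β=−1, ξ=0, f additive in each argument on S, and g arbitrary. Then eip is additive with respect to the timestamp-merging addition ⊕: for all A, B, C ∈ U* (such that A ⊕ B ∈ U*), eip(A ⊕ B, C) = eip(A, C) + eip(B, C). -/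
noncomputable section

/-!
With `α = 1`, `β = -1`, `ξ = 0` the recursion for `ep` is inclusion–exclusion over the two
prefixes, so `eip(A, C)` is the plain double sum of `f a c · g(t_a, t_c)` over all pairs of
samples. This sum is additive in each sample's spatial value, and `⊕` only concatenates samples,
adds values at equal timestamps, or drops samples whose value became zero; none of this changes
a sum of terms additive in the value.
-/

theorem ep_one_neg_one_zero_eq_sum {S : Type*} (f : S → S → ℝ) (g : ℝ → ℝ → ℝ)
    (A C : List (ℝ × S)) :
    ep f g 1 (-1) 0 A C = (A.map fun p => (C.map fun q => f p.2 q.2 * g p.1 q.1).sum).sum := by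
  induction A, C using ep.induct with
  | case1 C => simp [ep]
  | case2 x A => simp [ep]
  | case3 t a A u b B ih₁ ih₂ ih₃ =>
    rw [ep, ih₁, ih₂, ih₃]
    simp only [List.map_cons, List.sum_cons]
    ring

theorem sum_map_tsAdd {S M : Type*} [AddCommGroup S] [AddCommMonoid M] (F : ℝ → S →+ M)
    (A B : List (ℝ × S)) :
    ((tsAdd A B).map fun p => F p.1 p.2).sum
      = (A.map fun p => F p.1 p.2).sum + (B.map fun p => F p.1 p.2).sum := by
  induction A, B using tsAdd.induct with
  | case1 l => simp [tsAdd]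
  | case2 l _ => cases l <;> simp [tsAdd]
  | case3 t a A u b B h ih =>
    rw [tsAdd, if_pos h]
    simp only [List.map_cons, List.sum_cons, ih]
    abel
  | case4 t a A u b B h₁ h₂ ih =>
    rw [tsAdd, if_neg h₁, if_pos h₂]
    simp only [List.map_cons, List.sum_cons, ih]
    abel
  | case5 t a A u b B h₁ h₂ hab ih =>
    obtain rfl : t = u := le_antisymm (not_lt.mp h₁) (not_lt.mp h₂)
    have hcancel : F t a + F t b = 0 := by rw [← map_add, hab, map_zero]
    rw [tsAdd, if_neg h₁, if_neg h₂, if_pos hab, ih]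
    simp only [List.map_cons, List.sum_cons]
    rw [add_add_add_comm, hcancel, zero_add]
  | case6 t a A u b B h₁ h₂ hab ih =>
    obtain rfl : t = u := le_antisymm (not_lt.mp h₁) (not_lt.mp h₂)
    rw [tsAdd, if_neg h₁, if_neg h₂, if_neg hab]
    simp only [List.map_cons, List.sum_cons, ih, map_add]
    abel

theorem eip_additive_general
    {S : Type*} [AddCommGroup S]
    (f : S → S → ℝ) (g : ℝ → ℝ → ℝ)
    (hf_add_left : ∀ a b c : S, f (a + b) c = f a c + f b c) :
    ∀ A B C : List (ℝ × S), IsTS A → IsTS B → IsTS C →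
      ep f g 1 (-1) 0 (tsAdd A B) C
        = ep f g 1 (-1) 0 A C + ep f g 1 (-1) 0 B C := by
  intro A B C _ _ _
  let rowSum : ℝ → S →+ ℝ := fun t =>
    AddMonoidHom.mk' (fun a => (C.map fun q => f a q.2 * g t q.1).sum) fun a b => by
      simp only [hf_add_left, add_mul, List.sum_map_add]
  simp only [ep_one_neg_one_zero_eq_sum]
  exact sum_map_tsAdd rowSum A B

/-- with `α = 1`, `β = -1`, `ξ = 0` and `f` additive in each argument,
`eip` is additive with respect to the timestamp-merging addition `⊕`:
`eip(A ⊕ B, C) = eip(A, C) + eip(B, C)`. -/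
theorem eip_additive
    {S : Type*} [AddCommGroup S] [Module ℝ S]
    (f : S → S → ℝ) (g : ℝ → ℝ → ℝ)
    (hf_add_left : ∀ a b c : S, f (a + b) c = f a c + f b c)
    (hf_add_right : ∀ a b c : S, f a (b + c) = f a b + f a c) :
    ∀ A B C : List (ℝ × S), IsTS A → IsTS B → IsTS C →
      ep f g 1 (-1) 0 (tsAdd A B) C
        = ep f g 1 (-1) 0 A C + ep f g 1 (-1) 0 B C :=
  eip_additive_general f g hf_add_left

end
end

section
/- Let eip be an elastic inner product on U* with induced distance δ_eip, and let ν > 0. Then the Gaussian elastic kernel K(A,B) = exp(−ν · δ_eip(A,B)²) is a positive definite kernel on U*. -/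
noncomputable section

/-!
Expanding the square, `K(Aᵢ, Aⱼ) = e^{-ν eip(Aᵢ,Aᵢ)} · e^{-ν eip(Aⱼ,Aⱼ)} · e^{2ν eip(Aᵢ,Aⱼ)}`.
The first two factors only rescale the coefficients `cᵢ`, so it suffices that the entrywise
exponential of the Gram matrix `(2ν eip(Aᵢ,Aⱼ))ᵢⱼ` is positive semidefinite. The Gram matrix is,
because `∑ cᵢ cⱼ eip(Aᵢ,Aⱼ) = eip(X, X)` for the time series `X = ⊕ᵢ cᵢ ⊗ Aᵢ ∈ U*`; and the entrywise
exponential is the limit of `∑_{k ≤ N} M^{⊙k} / k!`, a positive combination of Schur powers.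
-/

namespace Matrix

variable {ι 𝕜 : Type*}

theorem posSemidef_iff_sum_sum_nonneg [Fintype ι] {M : Matrix ι ι ℝ} :
    M.PosSemidef ↔ M.IsHermitian ∧ ∀ x : ι → ℝ, 0 ≤ ∑ i, ∑ j, x i * x j * M i j := by
  have (x : ι → ℝ) : x ⬝ᵥ (M *ᵥ x) = ∑ i, ∑ j, x i * x j * M i j := by
    simp only [dotProduct, mulVec, Finset.mul_sum]
    exact Finset.sum_congr rfl fun i _ => Finset.sum_congr rfl fun j _ => by ring
  simp [posSemidef_iff_dotProduct_mulVec, this]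

open ComplexOrder in
theorem PosSemidef.map_pow [Finite ι] [RCLike 𝕜] {M : Matrix ι ι 𝕜} (hM : M.PosSemidef)
    (k : ℕ) : (M.map (· ^ k)).PosSemidef := by
  induction k with
  | zero =>
    convert posSemidef_vecMulVec_self_star (fun _ : ι => (1 : 𝕜)) using 1
    ext; simp [vecMulVec]
  | succ k ih =>
    have : M.map (· ^ (k + 1)) = M.map (· ^ k) ⊙ M := by ext; simp [pow_succ]
    exact this ▸ ih.hadamard hM

theorem PosSemidef.map_exp [Fintype ι] {M : Matrix ι ι ℝ} (hM : M.PosSemidef) :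
    (M.map Real.exp).PosSemidef := by
  refine posSemidef_iff_sum_sum_nonneg.2 ⟨hM.isHermitian.map _ fun _ => rfl, fun x => ?_⟩
  have hexp (a b : ℝ) :
      HasSum (fun k : ℕ => (k.factorial : ℝ)⁻¹ * (b * a ^ k)) (b * Real.exp a) := by
    simpa [Real.exp_eq_exp_ℝ, mul_left_comm] using
      (NormedSpace.exp_series_hasSum_exp' (𝕂 := ℝ) a).mul_left b
  have hsum : HasSum (fun k : ℕ => (k.factorial : ℝ)⁻¹ * ∑ i, ∑ j, x i * x j * M i j ^ k)
      (∑ i, ∑ j, x i * x j * Real.exp (M i j)) := by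
    simp only [Finset.mul_sum]
    exact hasSum_sum fun i _ => hasSum_sum fun j _ => hexp _ _
  refine hsum.nonneg fun k => mul_nonneg (by positivity) ?_
  exact (posSemidef_iff_sum_sum_nonneg.1 (hM.map_pow k)).2 x

end Matrix

section TimeSeries

variable {S : Type*}

theorem IsTS.nil [Zero S] : IsTS ([] : List (ℝ × S)) :=
  ⟨List.isChain_nil, by simp⟩

theorem isChain_iff_pairwise_fst_gt (l : List (ℝ × S)) :
    l.IsChain (fun p q => q.1 < p.1) ↔ l.Pairwise (fun p q => q.1 < p.1) := by
  rw [← List.isChain_map (R := (· > ·)) Prod.fst, List.isChain_iff_pairwise, List.pairwise_map]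

variable [AddCommGroup S]

@[simp]
theorem tsAdd_nil_right (A : List (ℝ × S)) : tsAdd A [] = A := by
  cases A <;> simp [tsAdd]

theorem fst_lt_of_mem_tsAdd {A B : List (ℝ × S)} {x : ℝ} (hA : ∀ q ∈ A, q.1 < x)
    (hB : ∀ q ∈ B, q.1 < x) : ∀ p ∈ tsAdd A B, p.1 < x := by
  induction A, B using tsAdd.induct with
  | case1 => simpa [tsAdd] using hB
  | case2 => simpa using hA
  | _ => rw [tsAdd]; split_ifs; simp only [List.forall_mem_cons] at *; grind

theorem snd_ne_zero_of_mem_tsAdd {A B : List (ℝ × S)} (hA : ∀ q ∈ A, q.2 ≠ 0)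
    (hB : ∀ q ∈ B, q.2 ≠ 0) : ∀ p ∈ tsAdd A B, p.2 ≠ 0 := by
  induction A, B using tsAdd.induct with
  | case1 => simpa [tsAdd] using hB
  | case2 => simpa using hA
  | _ => rw [tsAdd]; split_ifs; simp only [List.forall_mem_cons] at *; grind

theorem pairwise_tsAdd {A B : List (ℝ × S)} (hA : A.Pairwise (fun p q => q.1 < p.1))
    (hB : B.Pairwise (fun p q => q.1 < p.1)) :
    (tsAdd A B).Pairwise (fun p q => q.1 < p.1) := by
  induction A, B using tsAdd.induct with
  | case1 => simpa [tsAdd] using hB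
  | case2 => simpa using hA
  | _ =>
    rw [tsAdd]; split_ifs; simp only [List.pairwise_cons] at *
    try refine ⟨fst_lt_of_mem_tsAdd ?_ ?_, ?_⟩
    all_goals grind

theorem IsTS.tsAdd {A B : List (ℝ × S)} (hA : IsTS A) (hB : IsTS B) : IsTS (tsAdd A B) :=
  ⟨(isChain_iff_pairwise_fst_gt _).2 <| pairwise_tsAdd ((isChain_iff_pairwise_fst_gt A).1 hA.1)
      ((isChain_iff_pairwise_fst_gt B).1 hB.1),
    snd_ne_zero_of_mem_tsAdd hA.2 hB.2⟩

variable [Module ℝ S]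

theorem IsTS.tsSmul (r : ℝ) {A : List (ℝ × S)} (hA : IsTS A) : IsTS (tsSmul r A) := by
  unfold _root_.tsSmul
  split_ifs with hr
  · exact IsTS.nil
  · refine ⟨(List.isChain_map _).2 hA.1, ?_⟩
    simp only [List.forall_mem_map]
    exact fun q hq => smul_ne_zero hr (hA.2 q hq)

def tsLinComb {ι : Type*} (c : ι → ℝ) (A : ι → List (ℝ × S)) : List ι → List (ℝ × S)
  | [] => []
  | i :: l => tsAdd (tsSmul (c i) (A i)) (tsLinComb c A l)

theorem IsTS.tsLinComb {ι : Type*} (c : ι → ℝ) {A : ι → List (ℝ × S)} (hA : ∀ i, IsTS (A i))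
    (l : List ι) : IsTS (tsLinComb c A l) := by
  induction l with
  | nil => exact IsTS.nil
  | cons i l ih => exact ((hA i).tsSmul (c i)).tsAdd ih

namespace IsInnerOnTS

variable {ip : List (ℝ × S) → List (ℝ × S) → ℝ}

theorem nil_left (hip : IsInnerOnTS ip) {B : List (ℝ × S)} (hB : IsTS B) : ip [] B = 0 := by
  simpa [tsSmul] using hip.smul_left 0 B B hB hB

theorem tsLinComb_left (hip : IsInnerOnTS ip) {ι : Type*} (c : ι → ℝ)
    {A : ι → List (ℝ × S)} (hA : ∀ i, IsTS (A i)) {B : List (ℝ × S)} (hB : IsTS B)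
    (l : List ι) : ip (tsLinComb c A l) B = (l.map fun i => c i * ip (A i) B).sum := by
  induction l with
  | nil => exact hip.nil_left hB
  | cons i l ih =>
    rw [tsLinComb, hip.add_left _ _ _ ((hA i).tsSmul _) (.tsLinComb c hA l) hB,
      hip.smul_left _ _ _ (hA i) hB, ih, List.map_cons, List.sum_cons]

theorem posSemidef_gram (hip : IsInnerOnTS ip) {ι : Type*} [Fintype ι]
    {A : ι → List (ℝ × S)} (hA : ∀ i, IsTS (A i)) :
    (Matrix.of fun i j => ip (A i) (A j)).PosSemidef := by
  refine Matrix.posSemidef_iff_sum_sum_nonneg.2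
    ⟨Matrix.IsHermitian.ext fun i j => by simp [hip.symm _ _ (hA i) (hA j)], fun x => ?_⟩
  set X := tsLinComb x A Finset.univ.toList
  have hX : IsTS X := .tsLinComb x hA _
  calc 0 ≤ ip X X := hip.nonneg X hX
    _ = ∑ i, x i * ip (A i) X := by rw [hip.tsLinComb_left x hA hX, Finset.sum_map_toList]
    _ = ∑ i, ∑ j, x i * x j * ip (A i) (A j) := by
      refine Finset.sum_congr rfl fun i _ => ?_
      rw [hip.symm _ _ (hA i) hX, hip.tsLinComb_left x hA (hA i), Finset.sum_map_toList,
        Finset.mul_sum]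
      exact Finset.sum_congr rfl fun j _ => by rw [hip.symm _ _ (hA j) (hA i)]; ring

end IsInnerOnTS

end TimeSeries

/-- for `ν > 0`, the Gaussian elastic kernel
`K(A,B) = exp(-ν · δ_eip(A,B)²)` is a positive definite kernel on `U*`. -/
theorem eip_gaussian_kernel_positive_definite
    {S : Type*} [AddCommGroup S] [Module ℝ S]
    (ip : List (ℝ × S) → List (ℝ × S) → ℝ) (hip : IsInnerOnTS ip)
    (ν : ℝ) (hν : 0 < ν) :
    ∀ (n : ℕ) (A : Fin n → List (ℝ × S)), (∀ i, IsTS (A i)) →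
      ∀ c : Fin n → ℝ,
        0 ≤ ∑ i : Fin n, ∑ j : Fin n,
              c i * c j *
                Real.exp (-(ν * (ip (A i) (A i) + ip (A j) (A j)
                  - 2 * ip (A i) (A j)))) := by
  intro n A hA c
  have hK := ((hip.posSemidef_gram hA).smul (by positivity : (0 : ℝ) ≤ 2 * ν)).map_exp
  convert (Matrix.posSemidef_iff_sum_sum_nonneg.1 hK).2
    fun i => c i * Real.exp (-(ν * ip (A i) (A i))) using 3 with i _ j _
  simp only [Matrix.map_apply, Matrix.smul_apply, Matrix.of_apply, smul_eq_mul]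
  rw [show -(ν * (ip (A i) (A i) + ip (A j) (A j) - 2 * ip (A i) (A j)))
      = -(ν * ip (A i) (A i)) + -(ν * ip (A j) (A j)) + 2 * ν * ip (A i) (A j) by ring,
    Real.exp_add, Real.exp_add]
  ring

end
end
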